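/- Let E ⊂ 𝔻 be compact and infinite, with Fekete-type set functions V_n(E), M_n(E), and μ(Z_n) = Σ_{j=1}^n 1/∏_{k≠j} d(z_j, z_k) for Z_n ∈ Eⁿ. If Z_n attains V_n(E) and W_{n+1} attains V_{n+1}(E), then μ(W_{n+1}) · M(Z_n) ≤ n + 1, where M(Z_n) = sup_{z∈E} ∏_{j=1}^n d(z, z_j). -/

import Mathlib

/-- pseudo-hyperbolic distance -/
noncomputable def phd (z w : ℂ) : ℝ := ‖(z - w) / (1 - (starRingEnd ℂ) w * z)‖

/-- Vandermonde/Fekete product of a tuple for the pseudo-hyperbolic metric -/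
noncomputable def Vprod {n : ℕ} (z : Fin n → ℂ) : ℝ :=
  ∏ j : Fin n, ∏ k ∈ Finset.univ.filter (fun k => j < k), phd (z j) (z k)

/-- n-th Fekete-type quantity of a set E -/
noncomputable def Vn (E : Set ℂ) (n : ℕ) : ℝ :=
  sSup {t : ℝ | ∃ z : Fin n → ℂ, (∀ j, z j ∈ E) ∧ t = Vprod z}

/-- `M(Z_n) = sup_{z ∈ E} ∏_j d(z, z_j)` -/
noncomputable def Mconf (E : Set ℂ) {n : ℕ} (Z : Fin n → ℂ) : ℝ :=
  sSup {t : ℝ | ∃ z ∈ E, t = ∏ j, phd z (Z j)}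

/-- `μ(Z_n) = Σ_j 1 / ∏_{k ≠ j} d(z_j, z_k)` -/
noncomputable def muConf {n : ℕ} (Z : Fin n → ℂ) : ℝ :=
  ∑ j : Fin n, 1 / ∏ k ∈ Finset.univ.erase j, phd (Z j) (Z k)

lemma normSq_key (z w : ℂ) :
    Complex.normSq (1 - (starRingEnd ℂ) w * z) - Complex.normSq (z - w)
      = (1 - Complex.normSq z) * (1 - Complex.normSq w) := by
  simp [Complex.normSq_apply, Complex.sub_re, Complex.sub_im, Complex.mul_re, Complex.mul_im,
    Complex.one_re, Complex.one_im, Complex.conj_re, Complex.conj_im]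
  ring

lemma phd_nonneg (z w : ℂ) : 0 ≤ phd z w := norm_nonneg _

lemma phd_comm (z w : ℂ) : phd z w = phd w z := by
  unfold phd
  rw [norm_div, norm_div]
  have h1 : ‖z - w‖ = ‖w - z‖ := by rw [norm_sub_rev]
  have h2 : ‖1 - (starRingEnd ℂ) w * z‖ = ‖1 - (starRingEnd ℂ) z * w‖ := by
    rw [← RCLike.norm_conj (1 - (starRingEnd ℂ) w * z)]
    congr 1
    simp [map_sub, map_mul, mul_comm]
  rw [h1, h2]

lemma norm_lt_of_ball (z w : ℂ) (hz : ‖z‖ < 1) (hw : ‖w‖ < 1) :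
    ‖z - w‖ < ‖1 - (starRingEnd ℂ) w * z‖ := by
  have h := normSq_key z w
  have hz' : Complex.normSq z < 1 := by
    have : Complex.normSq z = ‖z‖^2 := by rw [Complex.normSq_eq_norm_sq]
    nlinarith [norm_nonneg z]
  have hw' : Complex.normSq w < 1 := by
    have : Complex.normSq w = ‖w‖^2 := by rw [Complex.normSq_eq_norm_sq]
    nlinarith [norm_nonneg w]
  have h1 : Complex.normSq (z - w) < Complex.normSq (1 - (starRingEnd ℂ) w * z) := by nlinarith
  have e1 : Complex.normSq (z - w) = ‖z - w‖^2 := by rw [Complex.normSq_eq_norm_sq]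
  have e2 : Complex.normSq (1 - (starRingEnd ℂ) w * z) = ‖1 - (starRingEnd ℂ) w * z‖^2 := by
    rw [Complex.normSq_eq_norm_sq]
  nlinarith [norm_nonneg (z - w), norm_nonneg (1 - (starRingEnd ℂ) w * z)]

lemma phd_lt_one (z w : ℂ) (hz : ‖z‖ < 1) (hw : ‖w‖ < 1) : phd z w < 1 := by
  have h := norm_lt_of_ball z w hz hw
  unfold phd
  rw [norm_div]
  exact (div_lt_one (lt_of_le_of_lt (norm_nonneg _) h)).2 h

lemma phd_le_one (z w : ℂ) (hz : ‖z‖ < 1) (hw : ‖w‖ < 1) : phd z w ≤ 1 :=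
  (phd_lt_one z w hz hw).le

lemma phd_pos (z w : ℂ) (hz : ‖z‖ < 1) (hw : ‖w‖ < 1) (hne : z ≠ w) : 0 < phd z w := by
  unfold phd
  rw [norm_div]
  apply div_pos
  · simpa [sub_eq_zero] using hne
  · have : ‖(starRingEnd ℂ) w * z‖ < 1 := by
      rw [norm_mul, RCLike.norm_conj]
      nlinarith [norm_nonneg z, norm_nonneg w]
    have h2 := norm_sub_norm_le (1 : ℂ) ((starRingEnd ℂ) w * z)
    rw [norm_one] at h2
    linarith

lemma Vprod_pair {n : ℕ} (z : Fin n → ℂ) :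
    Vprod z = ∏ p ∈ (Finset.univ ×ˢ Finset.univ).filter
      (fun p : Fin n × Fin n => p.1 < p.2), phd (z p.1) (z p.2) := by
  rw [Vprod]
  simp only [Finset.prod_filter]
  rw [← Finset.prod_product']

lemma Vprod_remove {n : ℕ} (W : Fin (n + 1) → ℂ) (k : Fin (n + 1)) :
    Vprod W = Vprod (W ∘ k.succAbove) * ∏ j ∈ Finset.univ.erase k, phd (W k) (W j) := by
  classical
  rw [Vprod_pair, Vprod_pair]
  rw [← Finset.prod_filter_mul_prod_filter_not
    ((Finset.univ ×ˢ Finset.univ).filter (fun p : Fin (n+1) × Fin (n+1) => p.1 < p.2))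
    (fun p => p.1 ≠ k ∧ p.2 ≠ k)]
  congr 1
  · symm
    apply Finset.prod_nbij (fun p : Fin n × Fin n => (k.succAbove p.1, k.succAbove p.2))
    · intro p hp
      simp only [Finset.mem_filter, Finset.mem_product, Finset.mem_univ, true_and] at hp ⊢
      exact ⟨Fin.succAbove_lt_succAbove_iff.2 hp, k.succAbove_ne p.1, k.succAbove_ne p.2⟩
    · intro p _ q _ h
      have h1 := congrArg Prod.fst h
      have h2 := congrArg Prod.snd h
      simp only at h1 h2
      exact Prod.ext (k.succAbove_right_injective h1) (k.succAbove_right_injective h2)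
    · intro p hp
      simp only [Finset.coe_filter, Finset.mem_product, Finset.mem_univ, true_and,
        Set.mem_setOf_eq, Finset.mem_coe, Finset.mem_filter] at hp
      obtain ⟨hlt, h1, h2⟩ := hp
      obtain ⟨a, ha⟩ := Fin.exists_succAbove_eq h1
      obtain ⟨b, hb⟩ := Fin.exists_succAbove_eq h2
      refine ⟨(a, b), ?_, ?_⟩
      · have hab : a < b := by
          rw [← ha, ← hb] at hlt
          exact Fin.succAbove_lt_succAbove_iff.1 hlt
        simp [hab]
      · simp [ha, hb]
    · intro p _
      rfl
  · symm
    apply Finset.prod_nbij' (fun j : Fin (n+1) => if k < j then (k, j) else (j, k))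
      (fun p : Fin (n+1) × Fin (n+1) => if p.1 = k then p.2 else p.1)
    · intro j hj
      rw [Finset.mem_erase] at hj
      rcases lt_or_gt_of_ne hj.1 with h | h
      · simp [h, not_lt.2 h.le, Finset.mem_filter]
      · simp [h, Finset.mem_filter]
    · intro p hp
      simp only [Finset.mem_filter, Finset.mem_product, Finset.mem_univ, true_and,
        not_and_or, not_not] at hp
      obtain ⟨hlt, hk⟩ := hp
      rcases hk with h | h
      · simp only [h, if_pos rfl, Finset.mem_erase, Finset.mem_univ, and_true]
        exact (ne_of_gt (h ▸ hlt))
      · have : p.1 ≠ k := fun hc => absurd (hc ▸ h ▸ hlt) (lt_irrefl _)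
        simp only [if_neg this, Finset.mem_erase, Finset.mem_univ, and_true]
        exact this
    · intro j hj
      rw [Finset.mem_erase] at hj
      rcases lt_or_gt_of_ne hj.1 with h | h
      · simp [not_lt.2 h.le, hj.1]
      · simp [h, (ne_of_gt h).symm]
    · intro p hp
      simp only [Finset.mem_filter, Finset.mem_product, Finset.mem_univ, true_and,
        not_and_or, not_not] at hp
      obtain ⟨hlt, hk⟩ := hp
      rcases hk with h | h
      · simp [h, h ▸ hlt, Prod.ext_iff]
      · have h1 : p.1 ≠ k := fun hc => absurd (hc ▸ h ▸ hlt) (lt_irrefl _)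
        simp [if_neg h1, h ▸ hlt, not_lt.2 (h ▸ hlt).le, Prod.ext_iff, h]
    · intro j hj
      rw [Finset.mem_erase] at hj
      rcases lt_or_gt_of_ne hj.1 with h | h
      · rw [if_neg (not_lt.2 h.le)]
        exact phd_comm _ _
      · simp [h]

lemma prod_erase_zero {n : ℕ} (f : Fin (n + 1) → ℝ) :
    ∏ j ∈ Finset.univ.erase 0, f j = ∏ j : Fin n, f j.succ := by
  symm
  apply Finset.prod_nbij Fin.succ
  · intro a _
    simp [Fin.succ_ne_zero]
  · intro a _ b _ h
    exact Fin.succ_injective _ h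
  · intro p hp
    simp only [Finset.coe_erase, Set.mem_diff, Finset.mem_coe, Finset.mem_univ,
      Set.mem_singleton_iff, true_and] at hp
    obtain ⟨a, ha⟩ := Fin.exists_succ_eq.2 hp
    exact ⟨a, by simp, ha⟩
  · intro a _
    rfl

lemma Vprod_nonneg {n : ℕ} (z : Fin n → ℂ) : 0 ≤ Vprod z :=
  Finset.prod_nonneg fun _ _ => Finset.prod_nonneg fun _ _ => phd_nonneg _ _

lemma norm_lt_one_of_mem {E : Set ℂ} (hE : E ⊆ Metric.ball 0 1) {z : ℂ} (hz : z ∈ E) :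
    ‖z‖ < 1 := by
  have := hE hz
  rwa [Metric.mem_ball, dist_zero_right] at this

lemma Vprod_le_one {E : Set ℂ} (hE : E ⊆ Metric.ball 0 1) {n : ℕ} {z : Fin n → ℂ}
    (hz : ∀ j, z j ∈ E) : Vprod z ≤ 1 := by
  apply Finset.prod_le_one
  · intro j _
    exact Finset.prod_nonneg fun _ _ => phd_nonneg _ _
  · intro j _
    apply Finset.prod_le_one
    · intro k _
      exact phd_nonneg _ _
    · intro k _
      exact phd_le_one _ _ (norm_lt_one_of_mem hE (hz j)) (norm_lt_one_of_mem hE (hz k))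

lemma Vn_bddAbove {E : Set ℂ} (hE : E ⊆ Metric.ball 0 1) (n : ℕ) :
    BddAbove {t : ℝ | ∃ z : Fin n → ℂ, (∀ j, z j ∈ E) ∧ t = Vprod z} := by
  refine ⟨1, fun t ht => ?_⟩
  obtain ⟨z, hz, rfl⟩ := ht
  exact Vprod_le_one hE hz

lemma le_Vn {E : Set ℂ} (hE : E ⊆ Metric.ball 0 1) {n : ℕ} {z : Fin n → ℂ}
    (hz : ∀ j, z j ∈ E) : Vprod z ≤ Vn E n :=
  le_csSup (Vn_bddAbove hE n) ⟨z, hz, rfl⟩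

lemma Vn_pos {E : Set ℂ} (hEi : E.Infinite) (hE : E ⊆ Metric.ball 0 1) (n : ℕ) :
    0 < Vn E n := by
  classical
  obtain g := hEi.natEmbedding
  set z : Fin n → ℂ := fun j => (g j : ℂ) with hzdef
  have hzE : ∀ j, z j ∈ E := fun j => (g j).2
  have hpos : 0 < Vprod z := by
    apply Finset.prod_pos
    intro j _
    apply Finset.prod_pos
    intro k hk
    rw [Finset.mem_filter] at hk
    apply phd_pos _ _ (norm_lt_one_of_mem hE (hzE j)) (norm_lt_one_of_mem hE (hzE k))
    intro hc
    have : (j : ℕ) = (k : ℕ) := by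
      have := g.injective (Subtype.ext hc)
      exact_mod_cast this
    exact absurd (Fin.ext this) (ne_of_lt hk.2)
  exact lt_of_lt_of_le hpos (le_Vn hE hzE)

theorem stmt12 (E : Set ℂ) (hEc : IsCompact E) (hEi : E.Infinite)
    (hE : E ⊆ Metric.ball 0 1) (n : ℕ)
    (Z : Fin n → ℂ) (hZ : ∀ j, Z j ∈ E) (hZmax : Vprod Z = Vn E n)
    (W : Fin (n + 1) → ℂ) (hW : ∀ j, W j ∈ E) (hWmax : Vprod W = Vn E (n + 1)) :
    muConf W * Mconf E Z ≤ n + 1 := by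
  classical
  obtain ⟨z₀, hz₀⟩ := hEi.nonempty
  have hVZpos : 0 < Vprod Z := hZmax ▸ Vn_pos hEi hE n
  have hVWpos : 0 < Vprod W := hWmax ▸ Vn_pos hEi hE (n + 1)
  have hVnpos : 0 < Vn E n := Vn_pos hEi hE n
  have hVn1pos : 0 < Vn E (n + 1) := Vn_pos hEi hE (n + 1)
  -- Step A : Mconf E Z ≤ Vn E (n+1) / Vn E n
  have hMbound : Mconf E Z ≤ Vn E (n + 1) / Vn E n := by
    apply csSup_le
    · exact ⟨∏ j, phd z₀ (Z j), z₀, hz₀, rfl⟩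
    · rintro t ⟨z, hzE, rfl⟩
      rw [le_div_iff₀ hVnpos, ← hZmax]
      -- (∏ j, phd z (Z j)) * Vprod Z = Vprod (Fin.cons z Z) ≤ Vn E (n+1)
      have hcons : ∀ j, (Fin.cons z Z : Fin (n + 1) → ℂ) j ∈ E := by
        intro j
        refine Fin.cases ?_ ?_ j
        · simpa using hzE
        · intro i; simpa using hZ i
      have hkey := Vprod_remove (Fin.cons z Z) 0
      have h1 : (Fin.cons z Z : Fin (n + 1) → ℂ) ∘ (0 : Fin (n + 1)).succAbove = Z := by
        funext j
        simp [Fin.succAbove_zero]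
      have h2 : ∏ j ∈ Finset.univ.erase 0, phd ((Fin.cons z Z : Fin (n+1) → ℂ) 0)
          ((Fin.cons z Z : Fin (n+1) → ℂ) j) = ∏ j, phd z (Z j) := by
        rw [prod_erase_zero]
        simp
      rw [h1, h2] at hkey
      calc (∏ j, phd z (Z j)) * Vprod Z = Vprod (Fin.cons z Z) := by
            rw [hkey]; ring
        _ ≤ Vn E (n + 1) := le_Vn hE hcons
  -- Step B : muConf W ≤ (n+1) * (Vn E n / Vn E (n+1))
  have hmubound : muConf W ≤ (n + 1) * (Vn E n / Vn E (n + 1)) := by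
    rw [muConf]
    have hterm : ∀ j : Fin (n + 1),
        1 / ∏ k ∈ Finset.univ.erase j, phd (W j) (W k) ≤ Vn E n / Vn E (n + 1) := by
      intro j
      have hkey := Vprod_remove W j
      set P := ∏ k ∈ Finset.univ.erase j, phd (W j) (W k) with hP
      set Q := Vprod (W ∘ j.succAbove) with hQ
      have hQnn : 0 ≤ Q := Vprod_nonneg _
      have hVW' : 0 < Q * P := hkey ▸ hVWpos
      obtain ⟨hQpos, hPpos⟩ : 0 < Q ∧ 0 < P := by
        rcases mul_pos_iff.1 hVW' with h | h
        · exact h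
        · exact absurd h.1 (not_lt.2 hQnn)
      have hQle : Q ≤ Vn E n := le_Vn hE (fun i => hW _)
      -- 1/P = Q / Vprod W ≤ Vn E n / Vn E (n+1)
      have h1P : 1 / P = Q / Vprod W := by
        rw [hkey]
        field_simp
      rw [h1P, hWmax]
      exact div_le_div₀ hVnpos.le hQle hVn1pos le_rfl
    calc ∑ j : Fin (n + 1), 1 / ∏ k ∈ Finset.univ.erase j, phd (W j) (W k)
        ≤ ∑ _j : Fin (n + 1), Vn E n / Vn E (n + 1) :=
          Finset.sum_le_sum fun j _ => hterm j
      _ = (n + 1) * (Vn E n / Vn E (n + 1)) := by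
          rw [Finset.sum_const, Finset.card_univ, Fintype.card_fin, nsmul_eq_mul]
          push_cast
          ring
  -- combine
  have hmunn : 0 ≤ muConf W := by
    apply Finset.sum_nonneg
    intro j _
    apply div_nonneg zero_le_one
    exact Finset.prod_nonneg fun k _ => phd_nonneg _ _
  have hMnn : 0 ≤ Mconf E Z := by
    have hmem : (∏ j, phd z₀ (Z j)) ∈ {t : ℝ | ∃ z ∈ E, t = ∏ j, phd z (Z j)} :=
      ⟨z₀, hz₀, rfl⟩
    have hbdd : BddAbove {t : ℝ | ∃ z ∈ E, t = ∏ j, phd z (Z j)} := by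
      refine ⟨1, fun t ht => ?_⟩
      obtain ⟨z, hzE, rfl⟩ := ht
      apply Finset.prod_le_one
      · intro k _; exact phd_nonneg _ _
      · intro k _
        exact phd_le_one _ _ (norm_lt_one_of_mem hE hzE) (norm_lt_one_of_mem hE (hZ k))
    exact le_trans (Finset.prod_nonneg fun k _ => phd_nonneg _ _) (le_csSup hbdd hmem)
  calc muConf W * Mconf E Z
      ≤ ((n + 1) * (Vn E n / Vn E (n + 1))) * (Vn E (n + 1) / Vn E n) :=
        mul_le_mul hmubound hMbound hMnn
          (by positivity)
    _ = n + 1 := by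
        field_simp
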